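/- (Theorem 2) Let f, h, f̂, ĥ be continuous, let (f, h) be NI with storage function V (used as an SANI controller), let (f̂, ĥ) be OSNI with storage function V̂ and degree of output strictness ε > 0, and suppose W(x, x̂) = V(x) + V̂(x̂) − h(x)ᵀ ĥ(x̂) is continuous and positive definite. Assume further (Assumption 2, closed-loop form) that every sequence (z_k, ẑ_k)_{k∈ℕ} satisfying the closed-loop dynamics and ĥ(ẑ_{k+1}) = ĥ(ẑ_k) for all k ∈ ℕ satisfies z_k = 0 and ẑ_k = 0 for all sufficiently large k. Then every bounded closed-loop trajectory (x_k, x̂_k) converges to the origin: x_k → 0 and x̂_k → 0 as k → ∞. -/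

import Mathlib

open scoped RealInnerProductSpace

/-!
Along the closed loop the storage `W(x, x̂) = V(x) + V̂(x̂) - ⟪h x, ĥ x̂⟫` drops by at least
`ε ‖ĥ(x̂_{k+1}) - ĥ(x̂_k)‖²` per step, so it converges and the output increments tend to zero.
This is a discrete LaSalle invariance argument: the forward orbit of an ω-limit point of the
bounded trajectory consists of ω-limit points along which the controller output is constant, so
Assumption 2 drives it to the origin. Hence the limit of `W` is `W(0, 0) = 0`, and positive
definiteness of `W` leaves the origin as the only ω-limit point.
-/

open Filter Topology

theorem MapClusterPt.eq_of_tendsto {α X : Type*} [TopologicalSpace X] [T2Space X]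
    {l : Filter α} {u : α → X} {x y : X} (hx : MapClusterPt x l u) (hu : Tendsto u l (𝓝 y)) :
    x = y :=
  eq_of_nhds_neBot (ClusterPt.mono hx hu)

section LaSalle

variable {X : Type*} {F : X → X} {s : ℕ → X} {W D : X → ℝ}

theorem tendsto_dissipation_zero {L : ℝ} (hD0 : ∀ q, 0 ≤ D q) (hWD : ∀ q, W (F q) + D q ≤ W q)
    (hs : ∀ k, s (k + 1) = F (s k)) (hL : Tendsto (W ∘ s) atTop (𝓝 L)) :
    Tendsto (D ∘ s) atTop (𝓝 0) := by
  have hdiff : Tendsto (fun k => W (s k) - W (s (k + 1))) atTop (𝓝 0) := by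
    simpa using hL.sub (hL.comp (tendsto_add_atTop_nat 1))
  refine squeeze_zero (fun k => hD0 (s k)) (fun k => ?_) hdiff
  have := hWD (s k)
  rw [Function.comp_apply, hs k]
  linarith

variable [TopologicalSpace X]

theorem MapClusterPt.apply_of_forall_succ_eq (hF : Continuous F) (hs : ∀ k, s (k + 1) = F (s k))
    {q : X} (hq : MapClusterPt q atTop s) : MapClusterPt (F q) atTop s := by
  have hshift : F ∘ s = s ∘ (· + 1) := funext fun k => (hs k).symm
  have := hq.continuousAt_comp hF.continuousAt
  rw [hshift] at this
  exact this.of_comp (tendsto_add_atTop_nat 1)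

theorem MapClusterPt.iterate_of_forall_succ_eq (hF : Continuous F)
    (hs : ∀ k, s (k + 1) = F (s k)) {q : X} (hq : MapClusterPt q atTop s) (k : ℕ) :
    MapClusterPt (F^[k] q) atTop s := by
  induction k with
  | zero => exact hq
  | succ k ih =>
    rw [Function.iterate_succ_apply']
    exact ih.apply_of_forall_succ_eq hF hs

variable {K : Set X}

theorem exists_tendsto_lyapunov_of_isCompact (hW : Continuous W) (hD0 : ∀ q, 0 ≤ D q)
    (hWD : ∀ q, W (F q) + D q ≤ W q) (hK : IsCompact K) (hsK : ∀ k, s k ∈ K)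
    (hs : ∀ k, s (k + 1) = F (s k)) : ∃ L, Tendsto (W ∘ s) atTop (𝓝 L) := by
  have hanti : Antitone (W ∘ s) := antitone_nat_of_succ_le fun k => by
    have := hWD (s k)
    have := hD0 (s k)
    simp only [Function.comp_apply, hs k]
    linarith
  have hbdd : BddBelow (Set.range (W ∘ s)) :=
    (hK.bddBelow_image hW.continuousOn).mono
      (Set.range_subset_iff.2 fun k => Set.mem_image_of_mem W (hsK k))
  exact ⟨_, tendsto_atTop_ciInf hanti hbdd⟩

/-- Discrete-time LaSalle invariance principle, in the Barbashin–Krasovskii form. -/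
theorem tendsto_of_lyapunov_of_invariance {a : X} (hF : Continuous F) (hW : Continuous W)
    (hD : Continuous D) (hD0 : ∀ q, 0 ≤ D q) (hWD : ∀ q, W (F q) + D q ≤ W q)
    (hWa : ∀ q, q ≠ a → W a < W q) (hinv : ∀ q, (∀ k, D (F^[k] q) = 0) → ∃ k, F^[k] q = a)
    (hK : IsCompact K) (hsK : ∀ k, s k ∈ K) (hs : ∀ k, s (k + 1) = F (s k)) :
    Tendsto s atTop (𝓝 a) := by
  obtain ⟨L, hL⟩ := exists_tendsto_lyapunov_of_isCompact hW hD0 hWD hK hsK hs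
  have hDs := tendsto_dissipation_zero hD0 hWD hs hL
  have hWcluster : ∀ q, MapClusterPt q atTop s → W q = L := fun q hq =>
    (hq.continuousAt_comp hW.continuousAt).eq_of_tendsto hL
  have hDcluster : ∀ q, MapClusterPt q atTop s → D q = 0 := fun q hq =>
    (hq.continuousAt_comp hD.continuousAt).eq_of_tendsto hDs
  have hmem : ∀ᶠ k in atTop, s k ∈ K := Eventually.of_forall hsK
  obtain ⟨q₀, -, hq₀⟩ := hK.exists_mapClusterPt (tendsto_principal.2 hmem)
  obtain ⟨k, hk⟩ := hinv q₀ fun k => hDcluster _ (hq₀.iterate_of_forall_succ_eq hF hs k)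
  have hLa : W a = L := hk ▸ hWcluster _ (hq₀.iterate_of_forall_succ_eq hF hs k)
  refine hK.tendsto_nhds_of_unique_mapClusterPt hmem fun q _ hq => ?_
  by_contra hne
  exact (hWa q hne).ne (hLa.trans (hWcluster q hq).symm)

end LaSalle

section ClosedLoop

variable {X Z Y : Type*}

def closedLoop (f : X → Y → X) (h : X → Y) (fh : Z → Y → Z) (hh : Z → Y) (q : X × Z) : X × Z :=
  (f q.1 (hh q.2), fh q.2 (h (f q.1 (hh q.2))))

theorem continuous_closedLoop [TopologicalSpace X] [TopologicalSpace Z] [TopologicalSpace Y]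
    {f : X → Y → X} {h : X → Y} {fh : Z → Y → Z} {hh : Z → Y}
    (hfcont : Continuous fun q : X × Y => f q.1 q.2) (hhcont : Continuous h)
    (hfhcont : Continuous fun q : Z × Y => fh q.1 q.2) (hhhcont : Continuous hh) :
    Continuous (closedLoop f h fh hh) := by
  have hplant : Continuous fun q : X × Z => f q.1 (hh q.2) :=
    hfcont.comp (continuous_fst.prodMk (hhhcont.comp continuous_snd))
  exact hplant.prodMk (hfhcont.comp (continuous_snd.prodMk (hhcont.comp hplant)))

/-- The supply rates `⟪u, Δy⟫` of the plant and `⟪û, Δŷ⟫` of the controller add up to the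
increment of `⟪h x, ĥ x̂⟫`, because `u_k = ĥ(x̂_k)` and `û_k = h(x_{k+1})`. -/
theorem storage_closedLoop_add_le [NormedAddCommGroup Y] [InnerProductSpace ℝ Y]
    {f : X → Y → X} {h : X → Y} {fh : Z → Y → Z} {hh : Z → Y} {V : X → ℝ} {Vh : Z → ℝ} {ε : ℝ}
    (hNI : ∀ x u, V (f x u) - V x ≤ ⟪u, h (f x u) - h x⟫)
    (hOSNI : ∀ xh uh,
      Vh (fh xh uh) - Vh xh ≤ ⟪uh, hh (fh xh uh) - hh xh⟫ - ε * ‖hh (fh xh uh) - hh xh‖ ^ 2)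
    (q : X × Z) :
    V (closedLoop f h fh hh q).1 + Vh (closedLoop f h fh hh q).2
        - ⟪h (closedLoop f h fh hh q).1, hh (closedLoop f h fh hh q).2⟫
        + ε * ‖hh (closedLoop f h fh hh q).2 - hh q.2‖ ^ 2
      ≤ V q.1 + Vh q.2 - ⟪h q.1, hh q.2⟫ := by
  have hplant := hNI q.1 (hh q.2)
  have hcontroller := hOSNI q.2 (h (f q.1 (hh q.2)))
  simp only [closedLoop, inner_sub_right, real_inner_comm (hh q.2)] at hplant hcontroller ⊢
  linarith

end ClosedLoop

theorem SANI_OSNI_asymptotic_stability_general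
    (n m p : ℕ)
    (f : EuclideanSpace ℝ (Fin n) → EuclideanSpace ℝ (Fin p) → EuclideanSpace ℝ (Fin n))
    (h : EuclideanSpace ℝ (Fin n) → EuclideanSpace ℝ (Fin p))
    (fh : EuclideanSpace ℝ (Fin m) → EuclideanSpace ℝ (Fin p) → EuclideanSpace ℝ (Fin m))
    (hh : EuclideanSpace ℝ (Fin m) → EuclideanSpace ℝ (Fin p))
    (hfcont : Continuous fun q : EuclideanSpace ℝ (Fin n) × EuclideanSpace ℝ (Fin p) => f q.1 q.2)
    (hhcont : Continuous h)
    (hfhcont : Continuous fun q : EuclideanSpace ℝ (Fin m) × EuclideanSpace ℝ (Fin p) => fh q.1 q.2)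
    (hhhcont : Continuous hh)
    (V : EuclideanSpace ℝ (Fin n) → ℝ)
    (Vh : EuclideanSpace ℝ (Fin m) → ℝ)
    (ε : ℝ) (hε : 0 < ε)
    -- NI: V continuous positive definite plus dissipation inequality
    (hNI : ∀ (x : EuclideanSpace ℝ (Fin n)) (u : EuclideanSpace ℝ (Fin p)),
      V (f x u) - V x ≤ ⟪u, h (f x u) - h x⟫)
    -- OSNI: V̂ continuous positive definite plus strict dissipation inequality
    (hOSNI : ∀ (xh : EuclideanSpace ℝ (Fin m)) (uh : EuclideanSpace ℝ (Fin p)),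
      Vh (fh xh uh) - Vh xh ≤ ⟪uh, hh (fh xh uh) - hh xh⟫ - ε * ‖hh (fh xh uh) - hh xh‖ ^ 2)
    -- W continuous and positive definite
    (W : EuclideanSpace ℝ (Fin n) → EuclideanSpace ℝ (Fin m) → ℝ)
    (hW : ∀ x' xh', W x' xh' = V x' + Vh xh' - ⟪h x', hh xh'⟫)
    (hWcont : Continuous fun q : EuclideanSpace ℝ (Fin n) × EuclideanSpace ℝ (Fin m) => W q.1 q.2)
    (hW0 : W 0 0 = 0)
    (hWpos : ∀ (x' : EuclideanSpace ℝ (Fin n)) (xh' : EuclideanSpace ℝ (Fin m)),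
      ¬(x' = 0 ∧ xh' = 0) → 0 < W x' xh')
    -- Assumption 1 (closed-loop form): output-stationary closed-loop sequences vanish eventually
    (hAss : ∀ (z : ℕ → EuclideanSpace ℝ (Fin n)) (zh : ℕ → EuclideanSpace ℝ (Fin m)),
      (∀ k, z (k + 1) = f (z k) (hh (zh k))) →
      (∀ k, zh (k + 1) = fh (zh k) (h (f (z k) (hh (zh k))))) →
      (∀ k, hh (zh (k + 1)) = hh (zh k)) →
      ∃ K : ℕ, ∀ k ≥ K, z k = 0 ∧ zh k = 0)
    -- a bounded closed-loop trajectory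
    (x : ℕ → EuclideanSpace ℝ (Fin n)) (xh : ℕ → EuclideanSpace ℝ (Fin m))
    (hx : ∀ k, x (k + 1) = f (x k) (hh (xh k)))
    (hxh : ∀ k, xh (k + 1) = fh (xh k) (h (f (x k) (hh (xh k)))))
    (hbdd : ∃ R : ℝ, ∀ k, ‖x k‖ ≤ R ∧ ‖xh k‖ ≤ R) :
    Filter.Tendsto x Filter.atTop (nhds 0) ∧ Filter.Tendsto xh Filter.atTop (nhds 0) := by
  obtain ⟨R, hR⟩ := hbdd
  set F := closedLoop f h fh hh
  have hF : Continuous F := continuous_closedLoop hfcont hhcont hfhcont hhhcont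
  have hinv : ∀ q, (∀ k, ε * ‖hh (F (F^[k] q)).2 - hh (F^[k] q).2‖ ^ 2 = 0) →
      ∃ k, F^[k] q = 0 := fun q hq => by
    have hstationary (k : ℕ) : hh (F^[k + 1] q).2 = hh (F^[k] q).2 := by
      simpa [Function.iterate_succ_apply', hε.ne', sub_eq_zero] using hq k
    obtain ⟨K, hK⟩ := hAss (fun k => (F^[k] q).1) (fun k => (F^[k] q).2)
      (fun k => by rw [Function.iterate_succ_apply']; rfl)
      (fun k => by rw [Function.iterate_succ_apply']; rfl) hstationary
    exact ⟨K, Prod.ext (hK K le_rfl).1 (hK K le_rfl).2⟩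
  have hs : Tendsto (fun k => (x k, xh k)) atTop (𝓝 0) :=
    tendsto_of_lyapunov_of_invariance (W := fun q => W q.1 q.2)
      (D := fun q => ε * ‖hh (F q).2 - hh q.2‖ ^ 2) hF hWcont (by fun_prop)
      (fun q => by positivity)
      (fun q => by simpa only [hW] using storage_closedLoop_add_le hNI hOSNI q)
      (fun q hq => hW0 ▸ hWpos q.1 q.2 fun h0 => hq (Prod.ext h0.1 h0.2)) hinv
      (isCompact_closedBall 0 R) (fun k => by simpa [Prod.norm_def] using hR k)
      (fun k => Prod.ext (hx k) (hxh k))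
  exact ⟨(continuous_fst.tendsto 0).comp hs, (continuous_snd.tendsto 0).comp hs⟩

/-- Theorem 2: every bounded closed-loop trajectory of an SANI controller with an OSNI
plant converges to the origin, under positive definiteness of `W` and the
closed-loop form of Assumption 2. -/
theorem SANI_OSNI_asymptotic_stability
    (n m p : ℕ)
    (f : EuclideanSpace ℝ (Fin n) → EuclideanSpace ℝ (Fin p) → EuclideanSpace ℝ (Fin n))
    (h : EuclideanSpace ℝ (Fin n) → EuclideanSpace ℝ (Fin p))
    (fh : EuclideanSpace ℝ (Fin m) → EuclideanSpace ℝ (Fin p) → EuclideanSpace ℝ (Fin m))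
    (hh : EuclideanSpace ℝ (Fin m) → EuclideanSpace ℝ (Fin p))
    (hfcont : Continuous fun q : EuclideanSpace ℝ (Fin n) × EuclideanSpace ℝ (Fin p) => f q.1 q.2)
    (hhcont : Continuous h)
    (hfhcont : Continuous fun q : EuclideanSpace ℝ (Fin m) × EuclideanSpace ℝ (Fin p) => fh q.1 q.2)
    (hhhcont : Continuous hh)
    (V : EuclideanSpace ℝ (Fin n) → ℝ)
    (Vh : EuclideanSpace ℝ (Fin m) → ℝ)
    (ε : ℝ) (hε : 0 < ε)
    -- NI: V continuous positive definite plus dissipation inequality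
    (hVcont : Continuous V) (hV0 : V 0 = 0) (hVpos : ∀ x : EuclideanSpace ℝ (Fin n), x ≠ 0 → 0 < V x)
    (hNI : ∀ (x : EuclideanSpace ℝ (Fin n)) (u : EuclideanSpace ℝ (Fin p)),
      V (f x u) - V x ≤ ⟪u, h (f x u) - h x⟫)
    -- OSNI: V̂ continuous positive definite plus strict dissipation inequality
    (hVhcont : Continuous Vh) (hVh0 : Vh 0 = 0)
    (hVhpos : ∀ xh : EuclideanSpace ℝ (Fin m), xh ≠ 0 → 0 < Vh xh)
    (hOSNI : ∀ (xh : EuclideanSpace ℝ (Fin m)) (uh : EuclideanSpace ℝ (Fin p)),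
      Vh (fh xh uh) - Vh xh ≤ ⟪uh, hh (fh xh uh) - hh xh⟫ - ε * ‖hh (fh xh uh) - hh xh‖ ^ 2)
    -- W continuous and positive definite
    (W : EuclideanSpace ℝ (Fin n) → EuclideanSpace ℝ (Fin m) → ℝ)
    (hW : ∀ x' xh', W x' xh' = V x' + Vh xh' - ⟪h x', hh xh'⟫)
    (hWcont : Continuous fun q : EuclideanSpace ℝ (Fin n) × EuclideanSpace ℝ (Fin m) => W q.1 q.2)
    (hW0 : W 0 0 = 0)
    (hWpos : ∀ (x' : EuclideanSpace ℝ (Fin n)) (xh' : EuclideanSpace ℝ (Fin m)),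
      ¬(x' = 0 ∧ xh' = 0) → 0 < W x' xh')
    -- Assumption 1 (closed-loop form): output-stationary closed-loop sequences vanish eventually
    (hAss : ∀ (z : ℕ → EuclideanSpace ℝ (Fin n)) (zh : ℕ → EuclideanSpace ℝ (Fin m)),
      (∀ k, z (k + 1) = f (z k) (hh (zh k))) →
      (∀ k, zh (k + 1) = fh (zh k) (h (f (z k) (hh (zh k))))) →
      (∀ k, hh (zh (k + 1)) = hh (zh k)) →
      ∃ K : ℕ, ∀ k ≥ K, z k = 0 ∧ zh k = 0)
    -- a bounded closed-loop trajectory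
    (x : ℕ → EuclideanSpace ℝ (Fin n)) (xh : ℕ → EuclideanSpace ℝ (Fin m))
    (hx : ∀ k, x (k + 1) = f (x k) (hh (xh k)))
    (hxh : ∀ k, xh (k + 1) = fh (xh k) (h (f (x k) (hh (xh k)))))
    (hbdd : ∃ R : ℝ, ∀ k, ‖x k‖ ≤ R ∧ ‖xh k‖ ≤ R) :
    Filter.Tendsto x Filter.atTop (nhds 0) ∧ Filter.Tendsto xh Filter.atTop (nhds 0) :=
  SANI_OSNI_asymptotic_stability_general n m p f h fh hh hfcont hhcont hfhcont hhhcont V Vh ε hε hNI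
    hOSNI W hW hWcont hW0 hWpos hAss x xh hx hxh hbdd
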